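/- Let (X,d) be a metric space and L a connected, totally bounded subset of X. If the upper box dimension of L is finite, then limsup_{n→∞} e_n(L)^{1/n} < 1. -/

import Mathlib

/-! Finite upper box dimension gives some `C > 0` with `N(L, ε) ≤ ε ^ (-C)` for all small `ε`.
At `ε = 2 ^ (-(n - 1) / C)` this means `2 ^ (n - 1)` balls suffice, so
`eₙ(L) ≤ 2 ^ (-(n - 1) / C)`, whose `n`-th root tends to `2 ^ (-1 / C) < 1`. -/

open Filter Metric Set Topology

/-- The `n`-th dyadic entropy number of a set `L` in a metric space: the infimum of
radii `ε > 0` such that `L` can be covered by `2^(n-1)` balls of radius `ε`. -/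
noncomputable def entropyNum {X : Type*} [MetricSpace X] (n : ℕ) (L : Set X) : ℝ :=
  sInf {ε : ℝ | 0 < ε ∧ ∃ s : Finset X, s.card ≤ 2 ^ (n - 1) ∧ L ⊆ ⋃ x ∈ s, Metric.ball x ε}

/-- The covering number `N(L, ε)`: minimal number of `ε`-balls needed to cover `L`. -/
noncomputable def coveringNum {X : Type*} [MetricSpace X] (L : Set X) (ε : ℝ) : ℕ :=
  sInf {n : ℕ | ∃ s : Finset X, s.card = n ∧ L ⊆ ⋃ x ∈ s, Metric.ball x ε}

/-- The upper box (counting) dimension of `L`. -/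
noncomputable def upperBoxDim {X : Type*} [MetricSpace X] (L : Set X) : EReal :=
  Filter.limsup (fun ε : ℝ => ((Real.log (coveringNum L ε) / (-Real.log ε) : ℝ) : EReal)) (𝓝[>] 0)

/-- The lower box (counting) dimension of `L`. -/
noncomputable def lowerBoxDim {X : Type*} [MetricSpace X] (L : Set X) : EReal :=
  Filter.liminf (fun ε : ℝ => ((Real.log (coveringNum L ε) / (-Real.log ε) : ℝ) : EReal)) (𝓝[>] 0)

lemma TotallyBounded.exists_finset_card_eq_coveringNum {X : Type*} [MetricSpace X] {L : Set X}
    (htb : TotallyBounded L) {ε : ℝ} (hε : 0 < ε) :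
    ∃ s : Finset X, s.card = coveringNum L ε ∧ L ⊆ ⋃ x ∈ s, ball x ε := by
  obtain ⟨t, htf, hLt⟩ := totallyBounded_iff.1 htb ε hε
  have hne : {k | ∃ s : Finset X, s.card = k ∧ L ⊆ ⋃ x ∈ s, ball x ε}.Nonempty :=
    ⟨htf.toFinset.card, htf.toFinset, rfl, by simpa using hLt⟩
  exact Nat.sInf_mem hne

lemma TotallyBounded.entropyNum_le {X : Type*} [MetricSpace X] {L : Set X}
    (htb : TotallyBounded L) {n : ℕ} {ε : ℝ} (hε : 0 < ε) (hN : coveringNum L ε ≤ 2 ^ (n - 1)) :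
    entropyNum n L ≤ ε := by
  obtain ⟨s, hs, hLs⟩ := htb.exists_finset_card_eq_coveringNum hε
  exact csInf_le ⟨0, fun _ h => h.1.le⟩ ⟨hε, s, hs ▸ hN, hLs⟩

lemma entropyNum_nonneg {X : Type*} [MetricSpace X] (n : ℕ) (L : Set X) : 0 ≤ entropyNum n L :=
  Real.sInf_nonneg fun _ h => h.1.le

lemma eventually_coveringNum_le_rpow_neg_of_upperBoxDim_lt {X : Type*} [MetricSpace X]
    {L : Set X} {C : ℝ} (hC : upperBoxDim L < C) :
    ∀ᶠ ε in 𝓝[>] 0, (coveringNum L ε : ℝ) ≤ ε ^ (-C) := by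
  filter_upwards [eventually_lt_of_limsup_lt hC, Ioo_mem_nhdsGT one_pos] with ε hlt ⟨hε0, hε1⟩
  have hlog : 0 < -Real.log ε := neg_pos.2 (Real.log_neg hε0 hε1)
  have hlogN : Real.log (coveringNum L ε) < Real.log (ε ^ (-C)) := by
    rw [Real.log_rpow hε0]
    have := (div_lt_iff₀ hlog).1 (EReal.coe_lt_coe_iff.1 hlt)
    linarith
  calc (coveringNum L ε : ℝ) ≤ Real.exp (Real.log (coveringNum L ε)) := Real.le_exp_log _
    _ ≤ Real.exp (Real.log (ε ^ (-C))) := Real.exp_le_exp.2 hlogN.le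
    _ = ε ^ (-C) := Real.exp_log (Real.rpow_pos_of_pos hε0 _)

lemma limsup_rpow_one_div_le_of_le_pow {a : ℕ → ℝ} (ha : ∀ n, 0 ≤ a n) {r : ℝ} (hr : 0 < r)
    (h : ∀ᶠ n in atTop, a n ≤ r ^ (n - 1)) :
    limsup (fun n : ℕ => a n ^ ((1 : ℝ) / n)) atTop ≤ r := by
  have hlim : Tendsto (fun n : ℕ => r ^ (1 - (1 : ℝ) / n)) atTop (𝓝 r) := by
    have := (Real.continuousAt_const_rpow hr.ne').tendsto.comp
      ((tendsto_one_div_atTop_nhds_zero_nat (𝕜 := ℝ)).const_sub 1)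
    simpa [Function.comp_def] using this
  rw [← hlim.limsup_eq]
  refine limsup_le_limsup ?_ (isCoboundedUnder_le_of_le atTop fun n => Real.rpow_nonneg (ha n) _)
    hlim.isBoundedUnder_le
  filter_upwards [h, eventually_ge_atTop 1] with n hn hn1
  calc a n ^ ((1 : ℝ) / n) ≤ (r ^ (n - 1)) ^ ((1 : ℝ) / n) :=
        Real.rpow_le_rpow (ha n) hn (by positivity)
    _ = r ^ (1 - (1 : ℝ) / n) := by
        rw [← Real.rpow_natCast, ← Real.rpow_mul hr.le, Nat.cast_sub hn1]
        congr 1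
        field_simp
        simp

theorem stmt1_general {X : Type*} [MetricSpace X] (L : Set X)
    (htb : TotallyBounded L) (hdim : upperBoxDim L < ⊤) :
    Filter.limsup (fun n : ℕ => entropyNum n L ^ ((1 : ℝ) / n)) atTop < 1 := by
  obtain ⟨C, hC, hdimC⟩ : ∃ C : ℝ, 0 < C ∧ upperBoxDim L < C := by
    obtain ⟨c, hc, -⟩ := EReal.exists_between_coe_real hdim
    exact ⟨max c 1, lt_max_of_lt_right one_pos,
      hc.trans_le (EReal.coe_le_coe_iff.2 (le_max_left c 1))⟩
  have hcov := eventually_coveringNum_le_rpow_neg_of_upperBoxDim_lt hdimC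
  set r : ℝ := 2 ^ (-C⁻¹)
  have hr0 : 0 < r := by positivity
  have hr1 : r < 1 := Real.rpow_lt_one_of_one_lt_of_neg one_lt_two (by simpa using hC)
  have hradius : Tendsto (fun n : ℕ => r ^ (n - 1)) atTop (𝓝[>] 0) :=
    (tendsto_pow_atTop_nhdsWithin_zero_of_lt_one hr0 hr1).comp (tendsto_sub_atTop_nat 1)
  have hentropy : ∀ᶠ n in atTop, entropyNum n L ≤ r ^ (n - 1) := by
    filter_upwards [hradius.eventually hcov] with n hn
    refine htb.entropyNum_le (pow_pos hr0 _) ?_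
    have hpow : (r ^ (n - 1)) ^ (-C) = (2 : ℝ) ^ (n - 1) := by
      rw [← Real.rpow_natCast r, ← Real.rpow_mul zero_le_two, ← Real.rpow_mul zero_le_two,
        ← Real.rpow_natCast (2 : ℝ)]
      congr 1
      field_simp
    rw [hpow] at hn
    exact_mod_cast hn
  exact (limsup_rpow_one_div_le_of_le_pow (entropyNum_nonneg · L) hr0 hentropy).trans_lt hr1

/-- If a connected, totally bounded set has finite upper box dimension, then
`limsup eₙ(L)^(1/n) < 1`. -/
theorem stmt1 {X : Type*} [MetricSpace X] (L : Set X) (hconn : IsConnected L)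
    (htb : TotallyBounded L) (hdim : upperBoxDim L < ⊤) :
    Filter.limsup (fun n : ℕ => entropyNum n L ^ ((1 : ℝ) / n)) atTop < 1 :=
  stmt1_general L htb hdim
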